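/- Let I ⊆ ℝ and D ⊆ ℝ^d be bounded measurable sets and Q = I × D. For any p, q, r, s ∈ [1, ∞) there is a constant C > 0 depending only on Q, p, q, r, s such that for every measurable subset A ⊆ Q, the mixed norm of the indicator satisfies ‖1_A‖_{L^q(I; L^p(D))} ≤ C ‖1_A‖_{L^s(I; L^r(D))}^{min(r/p, s/q)}. -/

import Mathlib

open MeasureTheory Set

lemma aux_integrable {β : Type*} [MeasurableSpace β] (μ : Measure β) [IsFiniteMeasure μ]
    {g : β → ℝ} (hg : Measurable g) (M : ℝ) (hgM : ∀ x, ‖g x‖ ≤ M) :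
    Integrable g μ :=
  (MemLp.of_bound hg.aestronglyMeasurable M (Filter.Eventually.of_forall hgM)).integrable le_rfl

lemma aux_holder {β : Type*} [MeasurableSpace β] (μ : Measure β) [IsFiniteMeasure μ]
    {g : β → ℝ} (hg : Measurable g) (hg0 : ∀ x, 0 ≤ g x) (M : ℝ) (hgM : ∀ x, g x ≤ M)
    {e : ℝ} (he : 0 < e) (he1 : e ≤ 1) :
    ∫ x, g x ^ e ∂μ ≤ ((μ Set.univ).toReal + 1) ^ (1 - e) * (∫ x, g x ∂μ) ^ e := by
  have hXnn : 0 ≤ ∫ x, g x ∂μ := integral_nonneg hg0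
  rcases eq_or_lt_of_le he1 with he1' | he1'
  · subst he1'
    simp
  · have hconj : Real.HolderConjugate (1/e) (1/(1-e)) := by
      constructor
      · rw [one_div, one_div, inv_inv, inv_inv, inv_one]; ring
      · positivity
      · have : 0 < 1 - e := by linarith
        positivity
    have hgMabs : ∀ x, g x ≤ |M| := fun x => (hgM x).trans (le_abs_self M)
    have hmem1 : MemLp (fun x => g x ^ e) (ENNReal.ofReal (1/e)) μ := by
      refine MemLp.of_bound ((Real.continuous_rpow_const he.le).measurable.comp hg).aestronglyMeasurable (|M| ^ e)
        (Filter.Eventually.of_forall fun x => ?_)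
      rw [Real.norm_of_nonneg (Real.rpow_nonneg (hg0 x) e)]
      exact Real.rpow_le_rpow (hg0 x) (hgMabs x) he.le
    have hmem2 : MemLp (fun _ : β => (1:ℝ)) (ENNReal.ofReal (1/(1-e))) μ := memLp_const 1
    have H := integral_mul_le_Lp_mul_Lq_of_nonneg hconj
      (Filter.Eventually.of_forall fun x => Real.rpow_nonneg (hg0 x) e)
      (Filter.Eventually.of_forall fun _ => zero_le_one) hmem1 hmem2
    simp only [mul_one] at H
    calc ∫ x, g x ^ e ∂μ
        ≤ (∫ x, (g x ^ e) ^ (1/e) ∂μ) ^ (1 / (1/e)) *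
          (∫ x, (1:ℝ) ^ (1/(1-e)) ∂μ) ^ (1 / (1/(1-e))) := H
      _ = (∫ x, g x ∂μ) ^ e * ((μ Set.univ).toReal) ^ (1-e) := by
          rw [one_div_one_div, one_div_one_div]
          congr 1
          · congr 1
            refine integral_congr_ae (Filter.Eventually.of_forall fun x => ?_)
            show (g x ^ e) ^ (1/e) = g x
            rw [← Real.rpow_mul (hg0 x), mul_one_div, div_self he.ne', Real.rpow_one]
          · simp [Real.one_rpow, measure_univ, Measure.real]
      _ ≤ ((μ Set.univ).toReal + 1) ^ (1 - e) * (∫ x, g x ∂μ) ^ e := by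
          rw [mul_comm]
          exact mul_le_mul_of_nonneg_right
            (Real.rpow_le_rpow ENNReal.toReal_nonneg (by linarith) (by linarith))
            (Real.rpow_nonneg hXnn e)

lemma aux_main {β : Type*} [MeasurableSpace β] (μ : Measure β) [IsFiniteMeasure μ]
    {f : β → ℝ} (hf : Measurable f) (hf0 : ∀ t, 0 ≤ f t) {M : ℝ} (hM0 : 0 ≤ M)
    (hfM : ∀ t, f t ≤ M)
    (p q r s : ℝ) (hp : 1 ≤ p) (hq : 1 ≤ q) (hr : 1 ≤ r) (hs : 1 ≤ s) :
    (∫ t, f t ^ (q / p) ∂μ) ^ (1 / q)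
      ≤ (((M + 1) ^ (q / p - q * min (r / p) (s / q) / r)
          * ((μ Set.univ).toReal + 1) ^ (1 - q * min (r / p) (s / q) / s)) ^ (1 / q))
        * ((∫ t, f t ^ (s / r) ∂μ) ^ (1 / s)) ^ (min (r / p) (s / q)) := by
  have hp0 : (0:ℝ) < p := lt_of_lt_of_le one_pos hp
  have hq0 : (0:ℝ) < q := lt_of_lt_of_le one_pos hq
  have hr0 : (0:ℝ) < r := lt_of_lt_of_le one_pos hr
  have hs0 : (0:ℝ) < s := lt_of_lt_of_le one_pos hs
  set m := min (r / p) (s / q) with hm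
  have hm0 : 0 < m := lt_min (div_pos hr0 hp0) (div_pos hs0 hq0)
  set α := q * m / s with hα
  set a := q * m / r with ha
  set e1 := q / p with he1
  set e2 := s / r with he2
  have hα0 : 0 < α := by positivity
  have ha0 : 0 < a := by positivity
  have he10 : 0 < e1 := by positivity
  have he20 : 0 < e2 := by positivity
  have hα1 : α ≤ 1 := by
    rw [hα, div_le_one hs0]
    have := min_le_right (r / p) (s / q)
    rw [hm]
    calc q * min (r / p) (s / q) ≤ q * (s / q) := by
          exact mul_le_mul_of_nonneg_left this hq0.le
      _ = s := by field_simp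
  have hae1 : a ≤ e1 := by
    rw [ha, he1, div_le_div_iff₀ hr0 hp0]
    have h1 : m * p ≤ r := by
      have := min_le_left (r / p) (s / q)
      rw [hm]
      calc min (r / p) (s / q) * p ≤ (r / p) * p := mul_le_mul_of_nonneg_right this hp0.le
        _ = r := by field_simp
    calc q * m * p = q * (m * p) := by ring
      _ ≤ q * r := mul_le_mul_of_nonneg_left h1 hq0.le
  have hea : ∀ t, (f t ^ e2) ^ α = f t ^ a := by
    intro t
    rw [← Real.rpow_mul (hf0 t)]
    congr 1
    rw [he2, hα, ha]
    field_simp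
  set K := (M + 1) ^ (e1 - a) with hK
  have hK0 : 0 < K := by positivity
  -- measurability and integrability
  have hme2 : Measurable fun t => f t ^ e2 :=
    (Real.continuous_rpow_const he20.le).measurable.comp hf
  have hme1 : Measurable fun t => f t ^ e1 :=
    (Real.continuous_rpow_const he10.le).measurable.comp hf
  have hma : Measurable fun t => f t ^ a :=
    (Real.continuous_rpow_const ha0.le).measurable.comp hf
  have hbound : ∀ (e : ℝ), 0 ≤ e → ∀ t, ‖f t ^ e‖ ≤ M ^ e := by
    intro e he t
    rw [Real.norm_of_nonneg (Real.rpow_nonneg (hf0 t) e)]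
    exact Real.rpow_le_rpow (hf0 t) (hfM t) he
  have hInt1 : Integrable (fun t => f t ^ e1) μ :=
    aux_integrable μ hme1 (M ^ e1) (hbound e1 he10.le)
  have hInta : Integrable (fun t => f t ^ a) μ :=
    aux_integrable μ hma (M ^ a) (hbound a ha0.le)
  set X := ∫ t, f t ^ e2 ∂μ with hX
  have hX0 : 0 ≤ X := integral_nonneg fun t => Real.rpow_nonneg (hf0 t) e2
  -- pointwise bound
  have hpt : ∀ t, f t ^ e1 ≤ K * f t ^ a := by
    intro t
    by_cases hft : f t = 0
    · rw [hft, Real.zero_rpow he10.ne', Real.zero_rpow ha0.ne', mul_zero]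
    · have hftpos : 0 < f t := lt_of_le_of_ne (hf0 t) (Ne.symm hft)
      have : f t ^ e1 = f t ^ (e1 - a) * f t ^ a := by
        rw [← Real.rpow_add hftpos]; ring_nf
      rw [this]
      refine mul_le_mul_of_nonneg_right ?_ (Real.rpow_nonneg (hf0 t) a)
      exact Real.rpow_le_rpow (hf0 t) (by linarith [hfM t]) (by linarith)
  have hstep1 : ∫ t, f t ^ e1 ∂μ ≤ K * ∫ t, f t ^ a ∂μ := by
    calc ∫ t, f t ^ e1 ∂μ ≤ ∫ t, K * f t ^ a ∂μ :=
          integral_mono hInt1 (hInta.const_mul K) hpt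
      _ = K * ∫ t, f t ^ a ∂μ := integral_const_mul K _
  -- Hölder step
  have hstep2 : ∫ t, f t ^ a ∂μ ≤ ((μ Set.univ).toReal + 1) ^ (1 - α) * X ^ α := by
    have H := aux_holder μ hme2 (fun t => Real.rpow_nonneg (hf0 t) e2) (M ^ e2)
      (fun t => Real.rpow_le_rpow (hf0 t) (hfM t) he20.le) hα0 hα1
    calc ∫ t, f t ^ a ∂μ = ∫ t, (f t ^ e2) ^ α ∂μ := by
          refine integral_congr_ae (Filter.Eventually.of_forall fun t => ?_)
          exact (hea t).symm
      _ ≤ ((μ Set.univ).toReal + 1) ^ (1 - α) * X ^ α := H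
  have hchain : ∫ t, f t ^ e1 ∂μ
      ≤ (K * ((μ Set.univ).toReal + 1) ^ (1 - α)) * X ^ α := by
    calc ∫ t, f t ^ e1 ∂μ ≤ K * ∫ t, f t ^ a ∂μ := hstep1
      _ ≤ K * (((μ Set.univ).toReal + 1) ^ (1 - α) * X ^ α) :=
          mul_le_mul_of_nonneg_left hstep2 hK0.le
      _ = (K * ((μ Set.univ).toReal + 1) ^ (1 - α)) * X ^ α := by ring
  have hLHS0 : 0 ≤ ∫ t, f t ^ e1 ∂μ :=
    integral_nonneg fun t => Real.rpow_nonneg (hf0 t) e1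
  have hK20 : 0 ≤ K * ((μ Set.univ).toReal + 1) ^ (1 - α) := by positivity
  calc (∫ t, f t ^ e1 ∂μ) ^ (1 / q)
      ≤ ((K * ((μ Set.univ).toReal + 1) ^ (1 - α)) * X ^ α) ^ (1 / q) :=
        Real.rpow_le_rpow hLHS0 hchain (by positivity)
    _ = (K * ((μ Set.univ).toReal + 1) ^ (1 - α)) ^ (1 / q) * (X ^ (1 / s)) ^ m := by
        rw [Real.mul_rpow hK20 (Real.rpow_nonneg hX0 α)]
        congr 1
        rw [← Real.rpow_mul hX0, ← Real.rpow_mul hX0]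
        congr 1
        rw [hα]
        field_simp

/-- Mixed-norm comparison for indicator functions of subsets of a bounded cylinder
`Q = I × D`: `‖1_A‖_{L^q(I;L^p(D))} ≤ C ‖1_A‖_{L^s(I;L^r(D))}^{min(r/p, s/q)}`,
where `‖1_A‖_{L^q(I;L^p(D))} = (∫_I A_t^{q/p} dt)^{1/q}` and `A_t` is the Lebesgue
measure of the time-`t` slice of `A` inside `D`. -/
theorem indicator_mixed_norm_comparison {d : ℕ}
    (I : Set ℝ) (D : Set (EuclideanSpace ℝ (Fin d)))
    (hI : Bornology.IsBounded I) (hD : Bornology.IsBounded D)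
    (hIm : MeasurableSet I) (hDm : MeasurableSet D)
    (p q r s : ℝ) (hp : 1 ≤ p) (hq : 1 ≤ q) (hr : 1 ≤ r) (hs : 1 ≤ s) :
    ∃ C > 0, ∀ A : Set (ℝ × EuclideanSpace ℝ (Fin d)),
      MeasurableSet A → A ⊆ I ×ˢ D →
      (∫ t in I, (volume (D ∩ {x | (t, x) ∈ A})).toReal ^ (q / p)) ^ (1 / q)
        ≤ C * ((∫ t in I, (volume (D ∩ {x | (t, x) ∈ A})).toReal ^ (s / r)) ^ (1 / s))
              ^ (min (r / p) (s / q)) := by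
  have hq0 : (0:ℝ) < q := lt_of_lt_of_le one_pos hq
  set M : ℝ := (volume D).toReal with hMdef
  have hM0 : 0 ≤ M := ENNReal.toReal_nonneg
  have hIfin : volume I < ⊤ := hI.measure_lt_top
  have hDfin : volume D ≠ ⊤ := hD.measure_lt_top.ne
  have hrestr : IsFiniteMeasure (volume.restrict I) :=
    ⟨by rwa [Measure.restrict_apply_univ]⟩
  refine ⟨((M + 1) ^ (q / p - q * min (r / p) (s / q) / r)
      * (((volume.restrict I) Set.univ).toReal + 1)
        ^ (1 - q * min (r / p) (s / q) / s)) ^ (1 / q), by positivity, ?_⟩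
  intro A hA hAsub
  set f : ℝ → ℝ := fun t => (volume (D ∩ {x | (t, x) ∈ A})).toReal with hfdef
  have hslice : ∀ t, D ∩ {x | (t, x) ∈ A}
      = Prod.mk t ⁻¹' ((Set.univ ×ˢ D) ∩ A) := by
    intro t
    ext x
    simp [Set.mem_preimage, Set.mem_prod]
  have hfm : Measurable f := by
    have : f = fun t => (volume (Prod.mk t ⁻¹' ((Set.univ ×ˢ D) ∩ A))).toReal :=
      funext fun t => by rw [hfdef]; simp only; rw [hslice t]
    rw [this]
    exact (measurable_measure_prodMk_left
      ((MeasurableSet.univ.prod hDm).inter hA)).ennreal_toReal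
  have hf0 : ∀ t, 0 ≤ f t := fun t => ENNReal.toReal_nonneg
  have hfM : ∀ t, f t ≤ M := fun t =>
    ENNReal.toReal_mono hDfin (measure_mono Set.inter_subset_left)
  exact aux_main (volume.restrict I) hfm hf0 hM0 hfM p q r s hp hq hr hs
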